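/- The set of solutions (p2, p3, p4, p10, p12, p41, p43, p45, p119) ∈ ℚ^9 with all coordinates nonzero of the system p41 = p10^3·p12, p43 = p10^2·p12^2, p45 = p10·p12^3, p119 = p41·p43·p10^2·p12^3, p119 = p10^12, p119 = p12^10, p119 = p2^60, p119 = p3^40, p119 = p4^30 forms, under componentwise multiplication, a group of order exactly 16 in which every element squares to the identity; hence it is isomorphic to (ℤ/2ℤ)^4. Explicitly, the nonzero solutions are exactly those with p10 = p43 = p119 = 1, p12 = p41 = p45 ∈ {1,−1}, p2 ∈ {1,−1}, p3 ∈ {1,−1}, p4 ∈ {1,−1}. -/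
import Mathlib

namespace Stmt7Aux

lemma rat_pm {q : ℚ} {n : ℕ} (hn : n ≠ 0) (h : q ^ n = 1) : q = 1 ∨ q = -1 := by
  have habs : |q| ^ n = 1 := by rw [← abs_pow, h, abs_one]
  have h1 : |q| = 1 := by
    rcases lt_trichotomy |q| 1 with hlt | heq | hgt
    · have := pow_lt_one₀ (abs_nonneg q) hlt hn
      rw [habs] at this; exact absurd this (lt_irrefl 1)
    · exact heq
    · have := one_lt_pow₀ hgt hn
      rw [habs] at this; exact absurd this (lt_irrefl 1)
  exact (abs_eq (by norm_num : (0:ℚ) ≤ 1)).mp h1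

lemma unit_pm {u : ℚˣ} {n : ℕ} (hn : n ≠ 0) (h : u ^ n = 1) : u = 1 ∨ u = -1 := by
  have hq : (u : ℚ) ^ n = 1 := by
    have := congrArg Units.val h
    simpa using this
  rcases rat_pm hn hq with h' | h'
  · left; ext; simpa using h'
  · right; ext; simpa using h'

lemma neg_one_ne_one : (-1 : ℚˣ) ≠ 1 := by
  intro hc
  have := congrArg Units.val hc
  norm_num at this

def uu : ZMod 2 → ℚˣ := fun a => if a = 0 then 1 else -1

lemma zmod2_cases : ∀ a : ZMod 2, a = 0 ∨ a = 1 := by decide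

lemma uu_mul (a b : ZMod 2) : uu (a + b) = uu a * uu b := by
  rcases zmod2_cases a with ha | ha <;> rcases zmod2_cases b with hb | hb <;>
    subst ha <;> subst hb <;>
    simp [uu, show ((1 : ZMod 2) + 1 = 0) from rfl]

lemma uu_inj {a b : ZMod 2} (h : uu a = uu b) : a = b := by
  rcases zmod2_cases a with ha | ha <;> rcases zmod2_cases b with hb | hb <;>
    subst ha <;> subst hb <;> simp [uu] at h ⊢ <;>
    first
      | rfl
      | exact absurd h.symm neg_one_ne_one
      | exact absurd h neg_one_ne_one

def φ (v : Fin 4 → ZMod 2) : Fin 9 → ℚˣ :=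
  ![uu (v 0), uu (v 1), uu (v 2), 1, uu (v 3), uu (v 3), 1, uu (v 3), 1]

lemma φ_mul (v w : Fin 4 → ZMod 2) : φ (v + w) = φ v * φ w := by
  funext i
  fin_cases i <;>
    first
      | exact uu_mul _ _
      | exact (one_mul (1 : ℚˣ)).symm

def e : Multiplicative (Fin 4 → ZMod 2) →* (Fin 9 → ℚˣ) :=
  MonoidHom.mk' (fun v => φ (Multiplicative.toAdd v)) (fun v w => φ_mul _ _)

lemma e_inj : Function.Injective e := by
  intro v w h
  have h' : φ (Multiplicative.toAdd v) = φ (Multiplicative.toAdd w) := h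
  have : Multiplicative.toAdd v = Multiplicative.toAdd w := by
    funext i
    fin_cases i
    · exact uu_inj (congrFun h' 0)
    · exact uu_inj (congrFun h' 1)
    · exact uu_inj (congrFun h' 2)
    · exact uu_inj (congrFun h' 4)
  exact Multiplicative.toAdd.injective this


lemma uu_pm (a : ZMod 2) : uu a = 1 ∨ uu a = -1 := by
  rcases zmod2_cases a with h | h <;> subst h <;> simp [uu]

lemma uu_sq (a : ZMod 2) : uu a * uu a = 1 := by
  rcases zmod2_cases a with h | h <;> subst h <;> simp [uu]

lemma uu_w (q : ℚˣ) (h : q = 1 ∨ q = -1) :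
    uu (if q = 1 then 0 else 1) = q := by
  rcases h with h | h <;> subst h <;> simp [uu, neg_one_ne_one]

lemma lift_pm {u : ℚˣ} (h : (u : ℚ) = 1 ∨ (u : ℚ) = -1) : u = 1 ∨ u = -1 := by
  rcases h with h | h
  · left; ext; simpa using h
  · right; ext; simpa using h

lemma sq_one_pow_even {u : ℚˣ} (h : u ^ 2 = 1) (k : ℕ) : u ^ (2 * k) = 1 := by
  rw [pow_mul, h, one_pow]

lemma range_eq_exp : (e.range : Set (Fin 9 → ℚˣ)) =
    {p : Fin 9 → ℚˣ | p 3 = 1 ∧ p 6 = 1 ∧ p 8 = 1 ∧ p 5 = p 4 ∧ p 7 = p 4 ∧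
      (p 4 = 1 ∨ p 4 = -1) ∧ (p 0 = 1 ∨ p 0 = -1) ∧ (p 1 = 1 ∨ p 1 = -1) ∧
      (p 2 = 1 ∨ p 2 = -1)} := by
  ext p
  constructor
  · rintro ⟨v, rfl⟩
    exact ⟨rfl, rfl, rfl, rfl, rfl, uu_pm _, uu_pm _, uu_pm _, uu_pm _⟩
  · rintro ⟨h3, h6, h8, h5, h7, h4d, h0d, h1d, h2d⟩
    classical
    refine ⟨Multiplicative.ofAdd
      ![if p 0 = 1 then 0 else 1, if p 1 = 1 then 0 else 1,
        if p 2 = 1 then 0 else 1, if p 4 = 1 then 0 else 1], ?_⟩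
    funext i
    fin_cases i
    · exact uu_w _ h0d
    · exact uu_w _ h1d
    · exact uu_w _ h2d
    · exact h3.symm
    · exact uu_w _ h4d
    · exact (uu_w _ h4d).trans h5.symm
    · exact h6.symm
    · exact (uu_w _ h4d).trans h7.symm
    · exact h8.symm

lemma exp_eq_eqs :
    {p : Fin 9 → ℚˣ | p 3 = 1 ∧ p 6 = 1 ∧ p 8 = 1 ∧ p 5 = p 4 ∧ p 7 = p 4 ∧
      (p 4 = 1 ∨ p 4 = -1) ∧ (p 0 = 1 ∨ p 0 = -1) ∧ (p 1 = 1 ∨ p 1 = -1) ∧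
      (p 2 = 1 ∨ p 2 = -1)} =
    {p : Fin 9 → ℚˣ | p 5 = p 3 ^ 3 * p 4 ∧
        p 6 = p 3 ^ 2 * p 4 ^ 2 ∧
        p 7 = p 3 * p 4 ^ 3 ∧
        p 8 = p 5 * p 6 * p 3 ^ 2 * p 4 ^ 3 ∧
        p 8 = p 3 ^ 12 ∧
        p 8 = p 4 ^ 10 ∧
        p 8 = p 0 ^ 60 ∧
        p 8 = p 1 ^ 40 ∧
        p 8 = p 2 ^ 30} := by
  ext p
  constructor
  · rintro ⟨h3, h6, h8, h5, h7, h4d, h0d, h1d, h2d⟩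
    have hsq : ∀ u : ℚˣ, u = 1 ∨ u = -1 → u ^ 2 = 1 := by
      rintro u (rfl | rfl)
      · rw [one_pow]
      · exact neg_one_sq
    have hb2 := hsq _ h4d
    have h0sq := hsq _ h0d
    have h1sq := hsq _ h1d
    have h2sq := hsq _ h2d
    have hcube : p 4 ^ 3 = p 4 := by
      rw [pow_succ, hb2, one_mul]
    refine ⟨?_, ?_, ?_, ?_, ?_, ?_, ?_, ?_, ?_⟩
    · rw [h5, h3, one_pow, one_mul]
    · rw [h6, h3, one_pow, one_mul, hb2]
    · rw [h7, h3, one_mul, hcube]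
    · rw [h8, h5, h6, h3, one_pow, mul_one, mul_one, hcube, ← pow_two, hb2]
    · rw [h8, h3, one_pow]
    · rw [h8]; exact (sq_one_pow_even hb2 5).symm
    · rw [h8]; exact (sq_one_pow_even h0sq 30).symm
    · rw [h8]; exact (sq_one_pow_even h1sq 20).symm
    · rw [h8]; exact (sq_one_pow_even h2sq 15).symm
  · rintro ⟨q5, q6, q7, q8a, q8b, q8c, q8d, q8e, q8f⟩
    -- pass to rational values
    set a : ℚ := (p 3 : ℚ) with ha_def
    set b : ℚ := (p 4 : ℚ) with hb_def
    have ha0 : a ≠ 0 := Units.ne_zero _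
    have hb0 : b ≠ 0 := Units.ne_zero _
    have v5 : ((p 5 : ℚ)) = a ^ 3 * b := by
      have := congrArg Units.val q5
      simpa using this
    have v6 : ((p 6 : ℚ)) = a ^ 2 * b ^ 2 := by
      have := congrArg Units.val q6
      simpa using this
    have v7 : ((p 7 : ℚ)) = a * b ^ 3 := by
      have := congrArg Units.val q7
      simpa using this
    have v8a : ((p 8 : ℚ)) = (p 5 : ℚ) * (p 6 : ℚ) * a ^ 2 * b ^ 3 := by
      have := congrArg Units.val q8a
      simpa using this
    have v8b : ((p 8 : ℚ)) = a ^ 12 := by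
      have := congrArg Units.val q8b
      simpa using this
    have v8c : ((p 8 : ℚ)) = b ^ 10 := by
      have := congrArg Units.val q8c
      simpa using this
    have key : a ^ 12 = a ^ 7 * b ^ 6 := by
      rw [← v8b, v8a, v5, v6]; ring
    have h56 : a ^ 5 = b ^ 6 := by
      have h7' : a ^ 7 * a ^ 5 = a ^ 7 * b ^ 6 := by
        rw [← pow_add]; exact key
      exact mul_left_cancel₀ (pow_ne_zero 7 ha0) h7'
    have hab : a ^ 12 = b ^ 10 := v8b.symm.trans v8c
    have h22 : b ^ 22 = 1 := by
      have h1 : b ^ 72 = b ^ 50 := by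
        calc b ^ 72 = (b ^ 6) ^ 12 := by ring
          _ = (a ^ 5) ^ 12 := by rw [h56]
          _ = (a ^ 12) ^ 5 := by ring
          _ = (b ^ 10) ^ 5 := by rw [hab]
          _ = b ^ 50 := by ring
      have h2 : b ^ 50 * b ^ 22 = b ^ 50 * 1 := by
        rw [mul_one, ← pow_add]; exact h1
      exact mul_left_cancel₀ (pow_ne_zero 50 hb0) h2
    have hbpm : b = 1 ∨ b = -1 := rat_pm (by norm_num) h22
    have hb2 : b ^ 2 = 1 := by
      rcases hbpm with h | h <;> rw [h] <;> norm_num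
    have ha1 : a = 1 := by
      have ha5 : a ^ 5 = 1 := by
        rw [h56]
        calc b ^ 6 = (b ^ 2) ^ 3 := by ring
          _ = 1 := by rw [hb2]; norm_num
      rcases rat_pm (by norm_num : (5:ℕ) ≠ 0) ha5 with h | h
      · exact h
      · rw [h] at ha5; norm_num at ha5
    have h8v : (p 8 : ℚ) = 1 := by rw [v8b, ha1, one_pow]
    refine ⟨?_, ?_, ?_, ?_, ?_, ?_, ?_, ?_, ?_⟩
    · exact Units.val_eq_one.mp ha1
    · exact Units.val_eq_one.mp (by rw [v6, ha1, one_pow, one_mul, hb2])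
    · exact Units.val_eq_one.mp h8v
    · exact Units.ext_iff.mpr (by rw [v5, ha1, one_pow, one_mul])
    · exact Units.ext_iff.mpr (by rw [v7, ha1, one_mul, pow_succ, hb2, one_mul])
    · exact lift_pm hbpm
    · refine lift_pm (rat_pm (by norm_num : (60:ℕ) ≠ 0) ?_)
      have := congrArg Units.val q8d
      simp only [Units.val_pow_eq_pow_val] at this
      rw [← this, h8v]
    · refine lift_pm (rat_pm (by norm_num : (40:ℕ) ≠ 0) ?_)
      have := congrArg Units.val q8e
      simp only [Units.val_pow_eq_pow_val] at this
      rw [← this, h8v]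
    · refine lift_pm (rat_pm (by norm_num : (30:ℕ) ≠ 0) ?_)
      have := congrArg Units.val q8f
      simp only [Units.val_pow_eq_pow_val] at this
      rw [← this, h8v]

end Stmt7Aux

open Stmt7Aux in
/-- Remark 3.3, algebra (ΛU₂, δ₂): nonzero solutions (tuples `Fin 9 → ℚˣ`,
coordinates `p 0 = p2`, `p 1 = p3`, `p 2 = p4`, `p 3 = p10`, `p 4 = p12`,
`p 5 = p41`, `p 6 = p43`, `p 7 = p45`, `p 8 = p119`) form a group of order 16
under componentwise multiplication in which every element squares to the
identity; hence it is isomorphic to (ℤ/2ℤ)⁴; explicitly they are the tuples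
with `p10 = p43 = p119 = 1`, `p12 = p41 = p45 ∈ {1,-1}`, `p2, p3, p4 ∈ {1,-1}`. -/
theorem stmt_7 :
    ∃ H : Subgroup (Fin 9 → ℚˣ),
      (H : Set (Fin 9 → ℚˣ)) =
        {p : Fin 9 → ℚˣ | p 5 = p 3 ^ 3 * p 4 ∧
        p 6 = p 3 ^ 2 * p 4 ^ 2 ∧
        p 7 = p 3 * p 4 ^ 3 ∧
        p 8 = p 5 * p 6 * p 3 ^ 2 * p 4 ^ 3 ∧
        p 8 = p 3 ^ 12 ∧
        p 8 = p 4 ^ 10 ∧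
        p 8 = p 0 ^ 60 ∧
        p 8 = p 1 ^ 40 ∧
        p 8 = p 2 ^ 30} ∧
      Nat.card H = 16 ∧
      (∀ x ∈ H, x * x = 1) ∧
      Nonempty (H ≃* Multiplicative (Fin 4 → ZMod 2)) ∧
      (H : Set (Fin 9 → ℚˣ)) =
        {p : Fin 9 → ℚˣ | p 3 = 1 ∧ p 6 = 1 ∧ p 8 = 1 ∧ p 5 = p 4 ∧ p 7 = p 4 ∧
          (p 4 = 1 ∨ p 4 = -1) ∧ (p 0 = 1 ∨ p 0 = -1) ∧ (p 1 = 1 ∨ p 1 = -1) ∧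
          (p 2 = 1 ∨ p 2 = -1)} := by
  refine ⟨e.range, ?_, ?_, ?_, ?_, ?_⟩
  · exact range_eq_exp.trans exp_eq_eqs
  · have h1 : Nat.card (Multiplicative (Fin 4 → ZMod 2)) = Nat.card e.range :=
      Nat.card_congr (MonoidHom.ofInjective e_inj).toEquiv
    rw [← h1, Nat.card_eq_fintype_card]
    decide
  · rintro x ⟨v, rfl⟩
    funext i
    fin_cases i <;>
      first
        | exact uu_sq _
        | exact one_mul 1
  · exact ⟨(MonoidHom.ofInjective e_inj).symm⟩
  · exact range_eq_exp
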